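/- arXiv:1208.5408 — 2 statements merged into one kernel-verified Lean document; each statement's English description precedes it below -/
import Mathlib

section
/- Let μ be a probability measure on [0,2π) with ∫₀^{2π} e^{ix} dμ(x) = 0, and let F be its cumulative distribution function with generalized inverse F⁻¹. Define Z(t) = ∫₀^t exp(i F⁻¹(u)) du for t ∈ [0,1]. Then the imaginary part y(t) = Im Z(t) satisfies y(0) = y(1) = 0 and y(t) ≥ 0 for all t ∈ [0,1]. -/
open MeasureTheory Real Set

/-- Cumulative distribution function `F_μ(x) = μ([0,x])`. -/
noncomputable def cdf' (μ : Measure ℝ) (x : ℝ) : ℝ := (μ (Set.Icc 0 x)).toReal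

/-- Generalized inverse `F_μ⁻¹(y) = inf {x ≥ 0 : F_μ(x) ≥ y}`. -/
noncomputable def qf (μ : Measure ℝ) (y : ℝ) : ℝ := sInf {x : ℝ | 0 ≤ x ∧ y ≤ cdf' μ x}

/-- The curve `Z_μ(t) = ∫₀^t exp(i F_μ⁻¹(u)) du`. -/
noncomputable def Zc (μ : Measure ℝ) (t : ℝ) : ℂ :=
  ∫ u in (0:ℝ)..t, Complex.exp (Complex.I * (qf μ u))

/-!
The quantile map `u ↦ F⁻¹(u)` pushes Lebesgue measure on `(0,1]` forward to `μ`, so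
`Z(1) = ∫ e^{ix} dμ = 0`. The derivative `y' = sin F⁻¹` of `y = Im Z` is `≥ 0` while
`F⁻¹ ≤ π`, that is for `u ≤ F(π)`, and `≤ 0` afterwards because `F⁻¹ ≤ 2π`. So `y` first
increases and then decreases to `y(1) = 0`, and never becomes negative.
-/

open ProbabilityTheory

lemma StieltjesFunction.le_apply_csInf {F : StieltjesFunction ℝ} {s : Set ℝ} {y : ℝ}
    (hne : s.Nonempty) (hs : ∀ x ∈ s, y ≤ F x) : y ≤ F (sInf s) := by
  have hright : ∀ x' ∈ Ioi (sInf s), y ≤ F x' := fun x' hx' => by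
    obtain ⟨x, hx, hxx'⟩ := exists_lt_of_csInf_lt hne hx'
    exact (hs x hx).trans (F.mono hxx'.le)
  exact ge_of_tendsto ((F.right_continuous _).mono Ioi_subset_Ici_self)
    (eventually_nhdsWithin_of_forall hright)

lemma intervalIntegral_nonneg_of_sign_change {g : ℝ → ℝ} {a b c t : ℝ}
    (hg : IntervalIntegrable g volume a b) (hpos : ∀ u ∈ Icc a b, u ≤ c → 0 ≤ g u)
    (hneg : ∀ u ∈ Icc a b, c < u → g u ≤ 0) (hzero : ∫ u in a..b, g u = 0)
    (ht : t ∈ Icc a b) : 0 ≤ ∫ u in a..t, g u := by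
  rcases le_or_gt t c with htc | hct
  · exact intervalIntegral.integral_nonneg ht.1 fun u hu =>
      hpos u ⟨hu.1, hu.2.trans ht.2⟩ (hu.2.trans htc)
  · have htb : t ∈ uIcc a b := mem_uIcc_of_le ht.1 ht.2
    have hsplit := intervalIntegral.integral_add_adjacent_intervals
      (hg.mono_set (uIcc_subset_uIcc left_mem_uIcc htb))
      (hg.mono_set (uIcc_subset_uIcc htb right_mem_uIcc))
    have htail : 0 ≤ ∫ u in t..b, -g u := intervalIntegral.integral_nonneg ht.2 fun u hu =>
      neg_nonneg.2 (hneg u ⟨ht.1.trans hu.1, hu.2⟩ (hct.trans_le hu.1))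
    rw [intervalIntegral.integral_neg] at htail
    linarith

section Quantile

variable {μ : Measure ℝ}

lemma qf_nonneg (y : ℝ) : 0 ≤ qf μ y := Real.sInf_nonneg fun _ hx => hx.1

lemma qf_le_of_le_cdf' {x y : ℝ} (hx : 0 ≤ x) (h : y ≤ cdf' μ x) : qf μ y ≤ x :=
  csInf_le ⟨0, fun _ hx => hx.1⟩ ⟨hx, h⟩

lemma sin_qf_nonneg {u : ℝ} (hu : u ≤ cdf' μ π) : 0 ≤ sin (qf μ u) :=
  sin_nonneg_of_nonneg_of_le_pi (qf_nonneg u) (qf_le_of_le_cdf' pi_pos.le hu)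

lemma cdf'_mono [IsFiniteMeasure μ] {x x' : ℝ} (h : x ≤ x') : cdf' μ x ≤ cdf' μ x' :=
  measureReal_mono (Icc_subset_Icc_right h)

lemma measure_Iio_zero_eq_zero (hsupp : μ (Ico 0 (2 * π))ᶜ = 0) : μ (Iio 0) = 0 :=
  measure_mono_null (fun x (hx : x < 0) (hx' : x ∈ Ico 0 (2 * π)) => hx.not_ge hx'.1) hsupp

variable [IsProbabilityMeasure μ]

lemma cdf'_le_one (x : ℝ) : cdf' μ x ≤ 1 := measureReal_le_one

lemma cdf'_eq_cdf (h0 : μ (Iio 0) = 0) : cdf' μ = cdf μ := by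
  ext x
  rw [cdf_eq_real, measureReal_def, cdf', show Icc 0 x = Iic x \ Iio 0 by ext; simp [and_comm],
    measure_sdiff_null h0]

lemma cdf'_two_pi (hsupp : μ (Ico 0 (2 * π))ᶜ = 0) : cdf' μ (2 * π) = 1 := by
  have hnull : μ (Iic (2 * π))ᶜ = 0 :=
    measure_mono_null (fun x (hx : x ∉ Iic (2 * π)) (h : x ∈ Ico 0 (2 * π)) => hx h.2.le) hsupp
  rw [cdf'_eq_cdf (measure_Iio_zero_eq_zero hsupp), cdf_eq_real, measureReal_def,
    (prob_compl_eq_zero_iff measurableSet_Iic).1 hnull, ENNReal.toReal_one]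

lemma le_cdf'_qf (hsupp : μ (Ico 0 (2 * π))ᶜ = 0) {y : ℝ} (hy : y ≤ 1) :
    y ≤ cdf' μ (qf μ y) := by
  unfold qf
  rw [cdf'_eq_cdf (measure_Iio_zero_eq_zero hsupp)]
  refine (cdf μ).le_apply_csInf ⟨2 * π, two_pi_pos.le, ?_⟩ fun _ hx => hx.2
  rwa [← cdf'_eq_cdf (measure_Iio_zero_eq_zero hsupp), cdf'_two_pi hsupp]

lemma qf_le_iff (hsupp : μ (Ico 0 (2 * π))ᶜ = 0) {x y : ℝ} (hy0 : 0 < y) (hy1 : y ≤ 1) :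
    qf μ y ≤ x ↔ y ≤ cdf' μ x := by
  refine ⟨fun h => (le_cdf'_qf hsupp hy1).trans (cdf'_mono h), fun h => qf_le_of_le_cdf' ?_ h⟩
  by_contra! hx
  rw [cdf', Icc_eq_empty_of_lt hx, measure_empty, ENNReal.toReal_zero] at h
  exact hy0.not_ge h

lemma qf_le_two_pi (hsupp : μ (Ico 0 (2 * π))ᶜ = 0) {y : ℝ} (hy : y ≤ 1) : qf μ y ≤ 2 * π :=
  qf_le_of_le_cdf' two_pi_pos.le (by rwa [cdf'_two_pi hsupp])

lemma qf_monotoneOn (hsupp : μ (Ico 0 (2 * π))ᶜ = 0) : MonotoneOn (qf μ) (Iic 1) :=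
  fun _ _ _ hy' hyy' => qf_le_of_le_cdf' (qf_nonneg _) (hyy'.trans (le_cdf'_qf hsupp hy'))

lemma aemeasurable_qf_restrict (hsupp : μ (Ico 0 (2 * π))ᶜ = 0) {ν : Measure ℝ} {s : Set ℝ}
    (hs : MeasurableSet s) (hs1 : s ⊆ Iic 1) : AEMeasurable (qf μ) (ν.restrict s) :=
  aemeasurable_restrict_of_monotoneOn hs ((qf_monotoneOn hsupp).mono hs1)

lemma map_qf_restrict_Ioc (hsupp : μ (Ico 0 (2 * π))ᶜ = 0) :
    (volume.restrict (Ioc (0 : ℝ) 1)).map (qf μ) = μ := by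
  refine (Measure.ext_of_Iic μ _ fun x => ?_).symm
  rw [Measure.map_apply_of_aemeasurable (aemeasurable_qf_restrict hsupp measurableSet_Ioc
    Ioc_subset_Iic_self) measurableSet_Iic, Measure.restrict_apply' measurableSet_Ioc]
  have hpre : qf μ ⁻¹' Iic x ∩ Ioc 0 1 = Ioc 0 (cdf' μ x) := by
    ext u
    simp only [mem_inter_iff, mem_preimage, mem_Iic, mem_Ioc]
    constructor
    · rintro ⟨hux, hu0, hu1⟩
      exact ⟨hu0, (qf_le_iff hsupp hu0 hu1).1 hux⟩
    · rintro ⟨hu0, hux⟩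
      have hu1 := hux.trans (cdf'_le_one x)
      exact ⟨(qf_le_iff hsupp hu0 hu1).2 hux, hu0, hu1⟩
  rw [hpre, Real.volume_Ioc, sub_zero, cdf'_eq_cdf (measure_Iio_zero_eq_zero hsupp), ofReal_cdf]

lemma setIntegral_Ioc_comp_qf (hsupp : μ (Ico 0 (2 * π))ᶜ = 0) {E : Type*}
    [NormedAddCommGroup E] [NormedSpace ℝ E] {f : ℝ → E} (hf : AEStronglyMeasurable f μ) :
    ∫ u in Ioc 0 1, f (qf μ u) = ∫ x, f x ∂μ := by
  rw [← integral_map (aemeasurable_qf_restrict hsupp measurableSet_Ioc Ioc_subset_Iic_self)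
    (by rwa [map_qf_restrict_Ioc hsupp]), map_qf_restrict_Ioc hsupp]

lemma intervalIntegrable_comp_qf (hsupp : μ (Ico 0 (2 * π))ᶜ = 0) {E : Type*}
    [NormedAddCommGroup E] {g : ℝ → E} (hg : Continuous g) {t : ℝ} (ht : t ≤ 1) :
    IntervalIntegrable (fun u => g (qf μ u)) volume 0 t := by
  obtain ⟨C, hC⟩ :=
    isCompact_Icc.exists_bound_of_continuousOn (hg.continuousOn (s := Icc 0 (2 * π)))
  have hsub : uIoc 0 t ⊆ Iic 1 := fun u hu => hu.2.trans (max_le zero_le_one ht)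
  rw [intervalIntegrable_iff]
  refine ⟨hg.comp_aestronglyMeasurable
    (aemeasurable_qf_restrict hsupp measurableSet_uIoc hsub).aestronglyMeasurable,
    .restrict_of_bounded (C := C) measure_Ioc_lt_top ?_⟩
  filter_upwards [ae_restrict_mem measurableSet_uIoc] with u hu
  exact hC _ ⟨qf_nonneg u, qf_le_two_pi hsupp (mem_Iic.1 (hsub hu))⟩

end Quantile

section Curve

variable {μ : Measure ℝ} [IsProbabilityMeasure μ]

lemma Zc_one (hsupp : μ (Ico 0 (2 * π))ᶜ = 0) :
    Zc μ 1 = ∫ x, Complex.exp (Complex.I * x) ∂μ := by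
  rw [Zc, intervalIntegral.integral_of_le zero_le_one,
    setIntegral_Ioc_comp_qf hsupp (by fun_prop : Continuous fun x : ℝ =>
      Complex.exp (Complex.I * x)).aestronglyMeasurable]

lemma Zc_im (hsupp : μ (Ico 0 (2 * π))ᶜ = 0) {t : ℝ} (ht : t ≤ 1) :
    (Zc μ t).im = ∫ u in (0 : ℝ)..t, sin (qf μ u) := by
  have him := intervalIntegral.intervalIntegral_im (intervalIntegrable_comp_qf hsupp
    (g := fun x : ℝ => Complex.exp (Complex.I * x)) (by fun_prop) ht)
  simp only [RCLike.im_to_complex] at him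
  rw [Zc, ← him]
  simp only [mul_comm Complex.I, Complex.exp_ofReal_mul_I_im]

lemma sin_qf_nonpos (hsupp : μ (Ico 0 (2 * π))ᶜ = 0) {u : ℝ} (hu : cdf' μ π < u)
    (hu1 : u ≤ 1) : sin (qf μ u) ≤ 0 := by
  have hpi : π < qf μ u :=
    not_le.1 fun h => hu.not_ge ((qf_le_iff hsupp (measureReal_nonneg.trans_lt hu) hu1).1 h)
  rw [← sin_sub_two_pi]
  exact sin_nonpos_of_nonpos_of_neg_pi_le (by linarith [qf_le_two_pi hsupp hu1]) (by linarith)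

end Curve

theorem stmt0 (μ : Measure ℝ) [IsProbabilityMeasure μ]
    (hsupp : μ (Set.Ico 0 (2*π))ᶜ = 0)
    (hclosed : ∫ x, Complex.exp (Complex.I * x) ∂μ = 0) :
    (Zc μ 0).im = 0 ∧ (Zc μ 1).im = 0 ∧ ∀ t ∈ Set.Icc (0:ℝ) 1, 0 ≤ (Zc μ t).im := by
  have hZ1 : Zc μ 1 = 0 := (Zc_one hsupp).trans hclosed
  refine ⟨by simp [Zc], by simp [hZ1], fun t ht => ?_⟩
  rw [Zc_im hsupp ht.2]
  refine intervalIntegral_nonneg_of_sign_change (c := cdf' μ π)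
    (intervalIntegrable_comp_qf hsupp continuous_sin le_rfl) (fun _ _ hu => sin_qf_nonneg hu)
    (fun _ hu hcu => sin_qf_nonpos hsupp hcu hu.2) ?_ ht
  rw [← Zc_im hsupp le_rfl, hZ1, Complex.zero_im]
end

section
/- Let μ, ν be probability measures on the circle ℝ/2πℤ with vanishing first Fourier coefficient (∫ e^{ix}dμ = ∫ e^{ix}dν = 0). Then A(μ ⋆ ν) ≥ max{A(μ), A(ν)}, where ⋆ is convolution on the circle and A is the area of the associated convex set of perimeter 1. -/
open MeasureTheory Real Set

/-- Wrap a real number into the interval [0, 2*pi) (reduction mod 2*pi). -/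
noncomputable def wrap (x : ℝ) : ℝ := 2*π * Int.fract (x / (2*π))

/-- Convolution of measures on the circle, realised on [0, 2*pi). -/
noncomputable def cconv (μ ν : Measure ℝ) : Measure ℝ :=
  Measure.map (fun p : ℝ × ℝ => wrap (p.1 + p.2)) (μ.prod ν)

/-- Fourier coefficient `a_k(μ) = (1/π) E[cos(k X_μ)]`. -/
noncomputable def aF (μ : Measure ℝ) (k : ℕ) : ℝ := (1/π) * ∫ x, Real.cos (k * x) ∂μ

/-- Fourier coefficient `b_k(μ) = (1/π) E[sin(k X_μ)]`. -/
noncomputable def bF (μ : Measure ℝ) (k : ℕ) : ℝ := (1/π) * ∫ x, Real.sin (k * x) ∂μ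

/-- Hurwitz area: `A(μ) = 1/(4π) − (π/2) Σ_{k≥2} (a_k² + b_k²)/(k²−1)`. -/
noncomputable def areaH (μ : Measure ℝ) : ℝ :=
  1/(4*π) - (π/2) * ∑' k : ℕ, (aF μ (k+2)^2 + bF μ (k+2)^2) / (((k:ℝ)+2)^2 - 1)

/-!
Shifting by a multiple of `2π` does not change `exp (i n x)` for integer `n`, so the integer
Fourier coefficients of the circle convolution `cconv μ ν` are the products of those of `μ` and
`ν`, each of modulus at most `1`. Hence every `a_k² + b_k²` can only decrease under convolution,
and `areaH`, being decreasing in these quantities, can only increase.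
-/

lemma wrap_eq_sub_floor_mul (x : ℝ) : wrap x = x - ⌊x / (2 * π)⌋ * (2 * π) := by
  rw [wrap, Int.fract]
  field_simp

@[fun_prop]
lemma measurable_wrap : Measurable wrap :=
  measurable_const.mul (measurable_fract.comp (measurable_id.div_const _))

lemma cconv_eq_map_conv (μ ν : Measure ℝ) : cconv μ ν = (μ ∗ ν).map wrap := by
  rw [Measure.conv, Measure.map_map measurable_wrap measurable_add]
  rfl

instance isFiniteMeasure_cconv (μ ν : Measure ℝ) [IsFiniteMeasure μ] [IsFiniteMeasure ν] :
    IsFiniteMeasure (cconv μ ν) := by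
  rw [cconv_eq_map_conv]
  infer_instance

lemma exp_intCast_mul_wrap_mul_I (n : ℤ) (x : ℝ) :
    Complex.exp ((n : ℝ) * wrap x * Complex.I) = Complex.exp ((n : ℝ) * x * Complex.I) := by
  have h : ((n : ℝ) : ℂ) * (wrap x : ℝ) * Complex.I
      = ((n : ℝ) : ℂ) * x * Complex.I + ((-(n * ⌊x / (2 * π)⌋) : ℤ) : ℂ) * (2 * π * Complex.I) := by
    rw [wrap_eq_sub_floor_mul]
    push_cast
    ring
  rw [h, Complex.exp_add, Complex.exp_int_mul_two_pi_mul_I, mul_one]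

lemma charFun_map_wrap_intCast (ρ : Measure ℝ) (n : ℤ) :
    charFun (ρ.map wrap) n = charFun ρ n := by
  rw [charFun_apply_real, charFun_apply_real, integral_map (by fun_prop) (by fun_prop)]
  simp_rw [exp_intCast_mul_wrap_mul_I]

lemma charFun_cconv_intCast (μ ν : Measure ℝ) [IsFiniteMeasure μ] [IsFiniteMeasure ν] (n : ℤ) :
    charFun (cconv μ ν) n = charFun μ n * charFun ν n := by
  rw [cconv_eq_map_conv, charFun_map_wrap_intCast, charFun_conv]

lemma integrable_exp_mul_I (μ : Measure ℝ) [IsFiniteMeasure μ] (t : ℝ) :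
    Integrable (fun x : ℝ => Complex.exp (t * x * Complex.I)) μ :=
  (integrable_const (1 : ℝ)).mono (by fun_prop) (by simp [← Complex.ofReal_mul])

lemma re_charFun (μ : Measure ℝ) [IsFiniteMeasure μ] (t : ℝ) :
    (charFun μ t).re = ∫ x, Real.cos (t * x) ∂μ := by
  rw [charFun_apply_real, ← RCLike.re_to_complex, ← integral_re (integrable_exp_mul_I μ t)]
  simp_rw [RCLike.re_to_complex, ← Complex.ofReal_mul, Complex.exp_ofReal_mul_I_re]

lemma im_charFun (μ : Measure ℝ) [IsFiniteMeasure μ] (t : ℝ) :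
    (charFun μ t).im = ∫ x, Real.sin (t * x) ∂μ := by
  rw [charFun_apply_real, ← RCLike.im_to_complex, ← integral_im (integrable_exp_mul_I μ t)]
  simp_rw [RCLike.im_to_complex, ← Complex.ofReal_mul, Complex.exp_ofReal_mul_I_im]

lemma aF_sq_add_bF_sq (μ : Measure ℝ) [IsFiniteMeasure μ] (k : ℕ) :
    aF μ k ^ 2 + bF μ k ^ 2 = ‖charFun μ k‖ ^ 2 / π ^ 2 := by
  rw [aF, bF, ← re_charFun, ← im_charFun, Complex.sq_norm, Complex.normSq_apply]
  field_simp

lemma add_one_sq_le_add_two_sq_sub_one (k : ℕ) : ((k : ℝ) + 1) ^ 2 ≤ ((k : ℝ) + 2) ^ 2 - 1 := by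
  nlinarith [k.cast_nonneg (α := ℝ)]

lemma areaH_term_nonneg (μ : Measure ℝ) (k : ℕ) :
    0 ≤ (aF μ (k+2)^2 + bF μ (k+2)^2) / (((k:ℝ)+2)^2 - 1) :=
  div_nonneg (by positivity) ((sq_nonneg _).trans (add_one_sq_le_add_two_sq_sub_one k))

lemma summable_areaH_terms (μ : Measure ℝ) [IsProbabilityMeasure μ] :
    Summable fun k : ℕ => (aF μ (k+2)^2 + bF μ (k+2)^2) / (((k:ℝ)+2)^2 - 1) := by
  have hbase : Summable fun k : ℕ => 1 / π ^ 2 / ((k : ℝ) + 1) ^ 2 := by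
    have h := (summable_nat_add_iff 1).mpr (Real.summable_one_div_nat_pow.mpr one_lt_two)
    refine (h.mul_left (1 / π ^ 2)).congr fun k => ?_
    push_cast
    ring
  refine hbase.of_nonneg_of_le (fun k => ?_) (fun k => ?_)
  · exact areaH_term_nonneg μ k
  · rw [aF_sq_add_bF_sq]
    gcongr
    · exact pow_le_one₀ (norm_nonneg _) (norm_charFun_le_one _)
    · exact add_one_sq_le_add_two_sq_sub_one k

lemma areaH_le_areaH_of_norm_charFun_le {μ σ : Measure ℝ} [IsProbabilityMeasure μ]
    [IsFiniteMeasure σ] (h : ∀ k : ℕ, ‖charFun σ k‖ ≤ ‖charFun μ k‖) : areaH μ ≤ areaH σ := by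
  have hterm : ∀ k : ℕ, (aF σ (k+2)^2 + bF σ (k+2)^2) / (((k:ℝ)+2)^2 - 1)
      ≤ (aF μ (k+2)^2 + bF μ (k+2)^2) / (((k:ℝ)+2)^2 - 1) := fun k => by
    rw [aF_sq_add_bF_sq, aF_sq_add_bF_sq]
    gcongr
    · exact (sq_nonneg _).trans (add_one_sq_le_add_two_sq_sub_one k)
    · exact h _
  have hμ := summable_areaH_terms μ
  unfold areaH
  gcongr 1 / (4 * π) - π / 2 * ?_
  exact (hμ.of_nonneg_of_le (areaH_term_nonneg σ) hterm).tsum_le_tsum hterm hμ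

lemma norm_charFun_cconv_le_left (μ ν : Measure ℝ) [IsFiniteMeasure μ] [IsProbabilityMeasure ν]
    (n : ℤ) : ‖charFun (cconv μ ν) n‖ ≤ ‖charFun μ n‖ := by
  rw [charFun_cconv_intCast, norm_mul]
  exact mul_le_of_le_one_right (norm_nonneg _) (norm_charFun_le_one _)

lemma norm_charFun_cconv_le_right (μ ν : Measure ℝ) [IsProbabilityMeasure μ] [IsFiniteMeasure ν]
    (n : ℤ) : ‖charFun (cconv μ ν) n‖ ≤ ‖charFun ν n‖ := by
  rw [charFun_cconv_intCast, norm_mul]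
  exact mul_le_of_le_one_left (norm_nonneg _) (norm_charFun_le_one _)

theorem stmt8_general (μ ν : Measure ℝ) [IsProbabilityMeasure μ] [IsProbabilityMeasure ν] :
    max (areaH μ) (areaH ν) ≤ areaH (cconv μ ν) :=
  max_le (areaH_le_areaH_of_norm_charFun_le fun k => norm_charFun_cconv_le_left μ ν k)
    (areaH_le_areaH_of_norm_charFun_le fun k => norm_charFun_cconv_le_right μ ν k)

theorem stmt8 (μ ν : Measure ℝ) [IsProbabilityMeasure μ] [IsProbabilityMeasure ν]
    (hμs : μ (Set.Ico 0 (2*π))ᶜ = 0) (hνs : ν (Set.Ico 0 (2*π))ᶜ = 0)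
    (hμ0 : ∫ x, Complex.exp (Complex.I * x) ∂μ = 0)
    (hν0 : ∫ x, Complex.exp (Complex.I * x) ∂ν = 0) :
    max (areaH μ) (areaH ν) ≤ areaH (cconv μ ν) :=
  stmt8_general μ ν
end
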